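/- arXiv:1103.3099 — 10 statements merged into one kernel-verified Lean document; each statement's English description precedes it below -/
import Mathlib

section
/- Fix constants R_max > 0, D_max > 0, Y_min ≤ Y_max with Y_max − Y_min > R_max + D_max, and cost constants 0 ≤ C_min < χ_min. Let V_max = (Y_max − Y_min − R_max − D_max)/(χ_min − C_min) and let V satisfy 0 < V ≤ V_max. Let X, R, D : ℕ → ℝ satisfy, for every slot t: X(t+1) = X(t) − D(t) + R(t), 0 ≤ R(t) ≤ R_max, 0 ≤ D(t) ≤ D_max, and the structural properties (i) if X(t) > −V·C_min then R(t) = 0, and (ii) if X(t) < −V·χ_min then D(t) = 0. If −V·χ_min − D_max ≤ X(0) ≤ Y_max − Y_min − D_max − V·χ_min, then −V·χ_min − D_max ≤ X(t) ≤ Y_max − Y_min − D_max − V·χ_min for all t ≥ 0. -/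
/-- Theorem 1, part 1: the shifted battery charge variable `X` of the dynamic
algorithm stays deterministically bounded in
`[-V*χmin - Dmax, Ymax - Ymin - Dmax - V*χmin]`. -/
theorem stmt_0
    (Rmax Dmax Ymin Ymax Cmin χmin V : ℝ)
    (hRmax : 0 < Rmax) (hDmax : 0 < Dmax)
    (hYle : Ymin ≤ Ymax)
    (hgap : Ymax - Ymin > Rmax + Dmax)
    (hCmin : 0 ≤ Cmin) (hχ : Cmin < χmin)
    (hV : 0 < V)
    (hVmax : V ≤ (Ymax - Ymin - Rmax - Dmax) / (χmin - Cmin))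
    (X R D : ℕ → ℝ)
    (hdyn : ∀ t, X (t + 1) = X t - D t + R t)
    (hR : ∀ t, 0 ≤ R t ∧ R t ≤ Rmax)
    (hD : ∀ t, 0 ≤ D t ∧ D t ≤ Dmax)
    (hnoRecharge : ∀ t, X t > -V * Cmin → R t = 0)
    (hnoDischarge : ∀ t, X t < -V * χmin → D t = 0)
    (hinit : -V * χmin - Dmax ≤ X 0 ∧ X 0 ≤ Ymax - Ymin - Dmax - V * χmin) :
    ∀ t, -V * χmin - Dmax ≤ X t ∧ X t ≤ Ymax - Ymin - Dmax - V * χmin := by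
  have hkey : V * (χmin - Cmin) ≤ Ymax - Ymin - Rmax - Dmax := by
    have hpos : 0 < χmin - Cmin := by linarith
    calc V * (χmin - Cmin) ≤ ((Ymax - Ymin - Rmax - Dmax) / (χmin - Cmin)) * (χmin - Cmin) := by
          apply mul_le_mul_of_nonneg_right hVmax hpos.le
      _ = Ymax - Ymin - Rmax - Dmax := div_mul_cancel₀ _ hpos.ne'
  intro t
  induction t with
  | zero => exact hinit
  | succ n ih =>
    obtain ⟨hl, hu⟩ := ih
    obtain ⟨hR0, hR1⟩ := hR n
    obtain ⟨hD0, hD1⟩ := hD n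
    rw [hdyn n]
    constructor
    · rcases lt_or_ge (X n) (-V * χmin) with h | h
      · rw [hnoDischarge n h]; linarith
      · linarith
    · rcases lt_or_ge (-V * Cmin) (X n) with h | h
      · rw [hnoRecharge n h]; linarith
      · nlinarith
end

section
/- Fix constants R_max > 0, D_max > 0, Y_min ≤ Y_max with Y_max − Y_min > R_max + D_max, and cost constants 0 ≤ C_min < χ_min. Let V_max = (Y_max − Y_min − R_max − D_max)/(χ_min − C_min) and let V satisfy 0 < V ≤ V_max. Let Y, R, D : ℕ → ℝ satisfy, for every slot t: Y(t+1) = Y(t) − D(t) + R(t), 0 ≤ R(t) ≤ R_max, 0 ≤ D(t) ≤ D_max, and, writing X(t) = Y(t) − V·χ_min − D_max − Y_min, the structural properties (i) if X(t) > −V·C_min then R(t) = 0, and (ii) if X(t) < −V·χ_min then D(t) = 0. If Y_min ≤ Y(0) ≤ Y_max, then Y_min ≤ Y(t) ≤ Y_max for all t ≥ 0. -/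
/-- Theorem 1, part 2: the dynamic algorithm never violates the finite battery
capacity constraint `Ymin ≤ Y t ≤ Ymax`. -/
theorem stmt_1
    (Rmax Dmax Ymin Ymax Cmin χmin V : ℝ)
    (hRmax : 0 < Rmax) (hDmax : 0 < Dmax)
    (hYle : Ymin ≤ Ymax)
    (hgap : Ymax - Ymin > Rmax + Dmax)
    (hCmin : 0 ≤ Cmin) (hχ : Cmin < χmin)
    (hV : 0 < V)
    (hVmax : V ≤ (Ymax - Ymin - Rmax - Dmax) / (χmin - Cmin))
    (Y R D : ℕ → ℝ)
    (hdyn : ∀ t, Y (t + 1) = Y t - D t + R t)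
    (hR : ∀ t, 0 ≤ R t ∧ R t ≤ Rmax)
    (hD : ∀ t, 0 ≤ D t ∧ D t ≤ Dmax)
    (hnoRecharge : ∀ t, Y t - V * χmin - Dmax - Ymin > -V * Cmin → R t = 0)
    (hnoDischarge : ∀ t, Y t - V * χmin - Dmax - Ymin < -V * χmin → D t = 0)
    (hinit : Ymin ≤ Y 0 ∧ Y 0 ≤ Ymax) :
    ∀ t, Ymin ≤ Y t ∧ Y t ≤ Ymax := by
  have hχC : 0 < χmin - Cmin := by linarith
  have hVb : V * (χmin - Cmin) ≤ Ymax - Ymin - Rmax - Dmax := by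
    have := (le_div_iff₀ hχC).mp hVmax
    linarith
  intro t
  induction t with
  | zero => exact hinit
  | succ n ih =>
    obtain ⟨h1, h2⟩ := ih
    obtain ⟨hR0, hR1⟩ := hR n
    obtain ⟨hD0, hD1⟩ := hD n
    rw [hdyn n]
    constructor
    · by_cases h : Y n < Dmax + Ymin
      · have := hnoDischarge n (by nlinarith)
        linarith
      · push_neg at h; linarith
    · by_cases h : Y n > V * (χmin - Cmin) + Dmax + Ymin
      · have := hnoRecharge n (by nlinarith)
        linarith
      · push_neg at h; linarith
end

section
/- Let C : ℝ → ℝ be nondecreasing with C(P) ≥ C_min for all P ≥ 0, where C_min ≥ 0. Let V > 0, C_rc ≥ 0, W ≥ 0, and suppose X > −V·C_min. Then for every δ > 0: (X + V·C(W + δ))·(W + δ) + V·C_rc > (X + V·C(W))·W. Consequently, any optimal solution of problem P3 (minimize (X + V·C(P))·P plus the recharge/discharge switching costs over feasible P) chooses recharge amount R* = 0 whenever X > −V·C_min. -/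
/-- Lemma 2, part 1: when `X > -V*Cmin`, recharging by any `δ > 0` gives a
strictly larger P3 objective value than drawing exactly the workload `W`
from the grid. -/
theorem stmt_2
    (C : ℝ → ℝ) (Cmin : ℝ)
    (hmono : Monotone C)
    (hlb : ∀ P : ℝ, 0 ≤ P → Cmin ≤ C P)
    (hCmin : 0 ≤ Cmin)
    (V Crc W X : ℝ)
    (hV : 0 < V) (hCrc : 0 ≤ Crc) (hW : 0 ≤ W)
    (hX : X > -V * Cmin) :
    ∀ δ : ℝ, 0 < δ →
      (X + V * C (W + δ)) * (W + δ) + V * Crc > (X + V * C W) * W := by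
  intro δ hδ
  have h1 : C W ≤ C (W + δ) := hmono (by linarith)
  have h2 : Cmin ≤ C (W + δ) := hlb _ (by linarith)
  have hpos : 0 < X + V * C (W + δ) := by nlinarith
  nlinarith [mul_nonneg hV.le hCrc, mul_pos hpos hδ, mul_nonneg hW (mul_nonneg hV.le (sub_nonneg.2 h1))]
end

section
/- Let P_peak > 0 and let C : ℝ → ℝ and χ_min ∈ ℝ satisfy: for all 0 ≤ P₁ ≤ P₂ ≤ P_peak, P₁·(−χ_min + C(P₁)) ≥ P₂·(−χ_min + C(P₂)). Let V > 0, C_dc ≥ 0, and suppose X < −V·χ_min. Then for every W and δ with 0 < δ ≤ W ≤ P_peak: (X + V·C(W − δ))·(W − δ) + V·C_dc > (X + V·C(W))·W. Consequently, any optimal solution of problem P3 chooses discharge amount D* = 0 whenever X < −V·χ_min. -/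
/-- Lemma 2, part 2: when `X < -V*χmin`, discharging by any `δ > 0` gives a
strictly larger P3 objective value than drawing exactly the workload `W`
from the grid.  The hypothesis on `χmin` is inequality (10) of the paper. -/
theorem stmt_3
    (Ppeak : ℝ) (hPpeak : 0 < Ppeak)
    (C : ℝ → ℝ) (χmin : ℝ)
    (hχ : ∀ P₁ P₂ : ℝ, 0 ≤ P₁ → P₁ ≤ P₂ → P₂ ≤ Ppeak →
      P₁ * (-χmin + C P₁) ≥ P₂ * (-χmin + C P₂))
    (V Cdc X : ℝ)
    (hV : 0 < V) (hCdc : 0 ≤ Cdc)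
    (hX : X < -V * χmin) :
    ∀ W δ : ℝ, 0 < δ → δ ≤ W → W ≤ Ppeak →
      (X + V * C (W - δ)) * (W - δ) + V * Cdc > (X + V * C W) * W := by
  intro W δ hδ hδW hW
  have h := hχ (W - δ) W (by linarith) (by linarith) hW
  nlinarith [mul_le_mul_of_nonneg_left h (le_of_lt hV),
    mul_lt_mul_of_pos_right hX hδ]
end

section
/- Let P_peak > 0 and let C : ℝ → ℝ be convex, nondecreasing, nonnegative, and differentiable on the interval [0, P_peak]. Set χ = C(P_peak) + P_peak·C′(P_peak). Then for all 0 ≤ P₁ ≤ P₂ ≤ P_peak: P₁·(−χ + C(P₁)) ≥ P₂·(−χ + C(P₂)); that is, the function P ↦ P·(C(P) − χ) is nonincreasing on [0, P_peak]. -/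
/-!
Write `d = C'(Ppeak)` and `χ = C(Ppeak) + Ppeak * d`. Convexity bounds every increment on the
left of `Ppeak` by the derivative there: `C P₂ - C P₁ ≤ (P₂ - P₁) * d`; together with
monotonicity this also gives `0 ≤ d`. Hence
`P₂ C(P₂) - P₁ C(P₁) = P₂ (C P₂ - C P₁) + (P₂ - P₁) C(P₁) ≤ (P₂ - P₁) (P₂ d + C(Ppeak)) ≤ (P₂ - P₁) χ`,
which is the claimed inequality.
-/

open Set

theorem ConvexOn.sub_le_mul_of_hasDerivWithinAt_of_le {S : Set ℝ} {f : ℝ → ℝ} {f' x y b : ℝ}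
    (hf : ConvexOn ℝ S f) (hx : x ∈ S) (hy : y ∈ S) (hb : b ∈ S)
    (hd : HasDerivWithinAt f f' S b) (hxy : x ≤ y) (hyb : y ≤ b) :
    f y - f x ≤ (y - x) * f' := by
  rcases hxy.eq_or_lt with rfl | hxy
  · simp
  have hxb : x < b := hxy.trans_le hyb
  have hslope : (f y - f x) / (y - x) ≤ f' :=
    calc (f y - f x) / (y - x) ≤ (f b - f x) / (b - x) :=
          hf.secant_mono hx hy hb hxy.ne' hxb.ne' hyb
      _ = slope f x b := (slope_def_field f x b).symm
      _ ≤ f' := hf.slope_le_of_hasDerivWithinAt hx hb hxb hd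
  rwa [div_le_iff₀ (sub_pos.mpr hxy), mul_comm] at hslope

theorem ConvexOn.nonneg_of_hasDerivWithinAt_of_monotoneOn {S : Set ℝ} {f : ℝ → ℝ} {f' x b : ℝ}
    (hf : ConvexOn ℝ S f) (hmono : MonotoneOn f S) (hx : x ∈ S) (hb : b ∈ S)
    (hd : HasDerivWithinAt f f' S b) (hxb : x < b) : 0 ≤ f' := by
  have hinc := hf.sub_le_mul_of_hasDerivWithinAt_of_le hx hb hb hd hxb.le le_rfl
  have hmono_xb : f x ≤ f b := hmono hx hb hxb.le
  exact nonneg_of_mul_nonneg_right (by linarith) (sub_pos.mpr hxb)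

theorem stmt_4_general
    (Ppeak : ℝ) (hPpeak : 0 < Ppeak)
    (C C' : ℝ → ℝ)
    (hconv : ConvexOn ℝ (Set.Icc 0 Ppeak) C)
    (hmono : MonotoneOn C (Set.Icc 0 Ppeak))
    (hderiv : ∀ x ∈ Set.Icc (0 : ℝ) Ppeak,
      HasDerivWithinAt C (C' x) (Set.Icc 0 Ppeak) x) :
    ∀ P₁ P₂ : ℝ, 0 ≤ P₁ → P₁ ≤ P₂ → P₂ ≤ Ppeak →
      P₁ * (-(C Ppeak + Ppeak * C' Ppeak) + C P₁) ≥
        P₂ * (-(C Ppeak + Ppeak * C' Ppeak) + C P₂) := by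
  intro P₁ P₂ h0P₁ hP₁P₂ hP₂
  have hmem₀ : (0 : ℝ) ∈ Icc 0 Ppeak := ⟨le_rfl, hPpeak.le⟩
  have hmem₁ : P₁ ∈ Icc 0 Ppeak := ⟨h0P₁, hP₁P₂.trans hP₂⟩
  have hmem₂ : P₂ ∈ Icc 0 Ppeak := ⟨h0P₁.trans hP₁P₂, hP₂⟩
  have hmemPeak : Ppeak ∈ Icc 0 Ppeak := ⟨hPpeak.le, le_rfl⟩
  have hd := hderiv Ppeak hmemPeak
  have hinc : C P₂ - C P₁ ≤ (P₂ - P₁) * C' Ppeak :=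
    hconv.sub_le_mul_of_hasDerivWithinAt_of_le hmem₁ hmem₂ hmemPeak hd hP₁P₂ hP₂
  have hd_nonneg : 0 ≤ C' Ppeak :=
    hconv.nonneg_of_hasDerivWithinAt_of_monotoneOn hmono hmem₀ hmemPeak hd hPpeak
  have hCP₁ : C P₁ ≤ C Ppeak := hmono hmem₁ hmemPeak (hP₁P₂.trans hP₂)
  linarith [mul_le_mul_of_nonneg_left hinc (h0P₁.trans hP₁P₂),
    mul_nonneg (sub_nonneg.mpr hP₁P₂) (mul_nonneg (sub_nonneg.mpr hP₂) hd_nonneg),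
    mul_nonneg (sub_nonneg.mpr hP₁P₂) (sub_nonneg.mpr hCP₁)]

/-- Section III-C claim: if the per-unit cost `C` is convex, nondecreasing,
nonnegative and differentiable on `[0, Ppeak]`, then
`χ = C(Ppeak) + Ppeak * C'(Ppeak)` satisfies the defining inequality (10),
i.e. `P ↦ P * (C P - χ)` is nonincreasing on `[0, Ppeak]`. -/
theorem stmt_4
    (Ppeak : ℝ) (hPpeak : 0 < Ppeak)
    (C C' : ℝ → ℝ)
    (hconv : ConvexOn ℝ (Set.Icc 0 Ppeak) C)
    (hmono : MonotoneOn C (Set.Icc 0 Ppeak))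
    (hnonneg : ∀ x ∈ Set.Icc (0 : ℝ) Ppeak, 0 ≤ C x)
    (hderiv : ∀ x ∈ Set.Icc (0 : ℝ) Ppeak,
      HasDerivWithinAt C (C' x) (Set.Icc 0 Ppeak) x) :
    ∀ P₁ P₂ : ℝ, 0 ≤ P₁ → P₁ ≤ P₂ → P₂ ≤ Ppeak →
      P₁ * (-(C Ppeak + Ppeak * C' Ppeak) + C P₁) ≥
        P₂ * (-(C Ppeak + Ppeak * C' Ppeak) + C P₂) :=
  stmt_4_general Ppeak hPpeak C C' hconv hmono hderiv
end

section
/- Let ε > 0 and U_max, Z_max ≥ 0, and set δ_max = ⌈(U_max + Z_max)/ε⌉. Let U, Z, s : ℕ → ℝ be sequences with s(τ) ≥ 0 and 0 ≤ Z(τ) ≤ Z_max for all τ, and such that Z(τ+1) ≥ Z(τ) − s(τ) + ε whenever U(τ) > 0. Then for every slot t: if U(τ) > 0 for all τ ∈ {t+1, …, t+δ_max}, then ∑_{τ=t+1}^{t+δ_max} s(τ) ≥ δ_max·ε − Z_max ≥ U_max. Consequently, if the unfinished work satisfies U(t+1) ≤ U_max and service is FIFO, every delay-tolerant workload arriving in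 slot t is served on or before slot t + δ_max. -/
/-- Lemma 4 (worst-case delay): with `δmax = ⌈(Umax + Zmax)/ε⌉`, if the
delay-tolerant queue is nonempty throughout `{t+1, …, t+δmax}`, then the total
service over that window is at least `δmax·ε − Zmax`, which is at least
`Umax`. -/
theorem stmt_8
    (ε Umax Zmax : ℝ)
    (hε : 0 < ε) (hUmax : 0 ≤ Umax) (hZmax : 0 ≤ Zmax)
    (U Z s : ℕ → ℝ)
    (hs : ∀ τ, 0 ≤ s τ)
    (hZb : ∀ τ, 0 ≤ Z τ ∧ Z τ ≤ Zmax)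
    (hZdyn : ∀ τ, U τ > 0 → Z (τ + 1) ≥ Z τ - s τ + ε) :
    ∀ t : ℕ,
      (∀ τ ∈ Finset.Icc (t + 1) (t + ⌈(Umax + Zmax) / ε⌉₊), U τ > 0) →
      (∑ τ ∈ Finset.Icc (t + 1) (t + ⌈(Umax + Zmax) / ε⌉₊), s τ ≥
          (⌈(Umax + Zmax) / ε⌉₊ : ℝ) * ε - Zmax) ∧
      ((⌈(Umax + Zmax) / ε⌉₊ : ℝ) * ε - Zmax ≥ Umax) := by
  intro t hU
  set δ := ⌈(Umax + Zmax) / ε⌉₊ with hδ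
  have key : ∀ n : ℕ, (∀ τ ∈ Finset.Icc (t + 1) (t + n), U τ > 0) →
      Z (t + 1 + n) ≥ Z (t + 1) - (∑ τ ∈ Finset.Icc (t + 1) (t + n), s τ) + n * ε := by
    intro n
    induction n with
    | zero => simp
    | succ n ih =>
      intro h
      have hsub : ∀ τ ∈ Finset.Icc (t + 1) (t + n), U τ > 0 := by
        intro τ hτ
        exact h τ (Finset.mem_Icc.mpr ⟨(Finset.mem_Icc.mp hτ).1,
          le_trans (Finset.mem_Icc.mp hτ).2 (by omega)⟩)
      have hUn : U (t + 1 + n) > 0 := h _ (Finset.mem_Icc.mpr ⟨by omega, by omega⟩)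
      have hstep := hZdyn _ hUn
      have hsum : (∑ τ ∈ Finset.Icc (t + 1) (t + (n + 1)), s τ) =
          (∑ τ ∈ Finset.Icc (t + 1) (t + n), s τ) + s (t + 1 + n) := by
        have : t + (n + 1) = (t + n) + 1 := by omega
        rw [this, Finset.sum_Icc_succ_top (by omega),
          show (t + n) + 1 = t + 1 + n from by omega]
      have h1 : t + 1 + (n + 1) = (t + 1 + n) + 1 := by omega
      rw [h1, hsum]
      have := ih hsub
      push_cast
      nlinarith [hs (t + 1 + n)]
  have hkey := key δ hU
  have hZ1 := (hZb (t + 1)).1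
  have hZ2 := (hZb (t + 1 + δ)).2
  constructor
  · nlinarith
  · have hle : (Umax + Zmax) / ε ≤ (δ : ℝ) := Nat.le_ceil _
    have := (div_le_iff₀ hε).mp hle
    linarith
end

section
/- Fix constants R_max > 0, D_max > 0, W1_max ≥ 0, ε ≥ 0, Y_min ≤ Y_max with Y_max − Y_min > R_max + D_max + W1_max + ε, and cost constants 0 ≤ C_min < χ_min. Let V_ext = (Y_max − Y_min − (R_max + D_max + W1_max + ε))/(χ_min − C_min), let V satisfy 0 < V ≤ V_ext, and set Q_max = V·χ_min + W1_max + ε. Let X, R, D : ℕ → ℝ satisfy, for every t: X(t+1) = X(t) − D(t) + R(t), 0 ≤ R(t) ≤ R_max, 0 ≤ D(t) ≤ D_max, and the structural properties (i) if X(t) > −V·C_min then R(t) = 0, and (ii) if X(t) < −Q_max then D(t) = 0. If −Q_max − D_max ≤ X(0) ≤ Y_max − Y_min − Q_max − D_max, then −Q_max − D_max ≤ X(t) ≤ Y_max − Y_min − Q_max − D_max for all t ≥ 0. -/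
/-- Theorem 2, part 2 (extended model): the shifted battery charge variable `X`
stays deterministically bounded in
`[-Qmax - Dmax, Ymax - Ymin - Qmax - Dmax]`, where
`Qmax = V·χmin + W1max + ε`. -/
theorem stmt_11
    (Rmax Dmax W1max ε Ymin Ymax Cmin χmin V : ℝ)
    (hRmax : 0 < Rmax) (hDmax : 0 < Dmax) (hW1 : 0 ≤ W1max) (hε : 0 ≤ ε)
    (hYle : Ymin ≤ Ymax)
    (hgap : Ymax - Ymin > Rmax + Dmax + W1max + ε)
    (hCmin : 0 ≤ Cmin) (hχ : Cmin < χmin)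
    (hV : 0 < V)
    (hVext : V ≤ (Ymax - Ymin - (Rmax + Dmax + W1max + ε)) / (χmin - Cmin))
    (X R D : ℕ → ℝ)
    (hdyn : ∀ t, X (t + 1) = X t - D t + R t)
    (hR : ∀ t, 0 ≤ R t ∧ R t ≤ Rmax)
    (hD : ∀ t, 0 ≤ D t ∧ D t ≤ Dmax)
    (hnoRecharge : ∀ t, X t > -V * Cmin → R t = 0)
    (hnoDischarge : ∀ t, X t < -(V * χmin + W1max + ε) → D t = 0)
    (hinit : -(V * χmin + W1max + ε) - Dmax ≤ X 0 ∧
      X 0 ≤ Ymax - Ymin - (V * χmin + W1max + ε) - Dmax) :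
    ∀ t, -(V * χmin + W1max + ε) - Dmax ≤ X t ∧
      X t ≤ Ymax - Ymin - (V * χmin + W1max + ε) - Dmax := by
  have hχC : 0 < χmin - Cmin := by linarith
  have hVle : V * (χmin - Cmin) ≤ Ymax - Ymin - (Rmax + Dmax + W1max + ε) := by
    calc V * (χmin - Cmin) ≤ ((Ymax - Ymin - (Rmax + Dmax + W1max + ε)) / (χmin - Cmin)) * (χmin - Cmin) := by
          exact mul_le_mul_of_nonneg_right hVext (le_of_lt hχC)
      _ = Ymax - Ymin - (Rmax + Dmax + W1max + ε) := by field_simp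
  intro t
  induction t with
  | zero => exact hinit
  | succ t ih =>
    obtain ⟨ih1, ih2⟩ := ih
    obtain ⟨hR0, hR1⟩ := hR t
    obtain ⟨hD0, hD1⟩ := hD t
    rw [hdyn t]
    constructor
    · by_cases h : X t < -(V * χmin + W1max + ε)
      · have := hnoDischarge t h; linarith
      · push_neg at h; linarith
    · by_cases h : X t > -V * Cmin
      · have := hnoRecharge t h; linarith
      · push_neg at h
        have : V * Cmin ≥ 0 := mul_nonneg hV.le hCmin
        nlinarith [hVle]
end

section
/- Fix constants R_max > 0, D_max > 0, W1_max ≥ 0, ε ≥ 0, Y_min ≤ Y_max with Y_max − Y_min > R_max + D_max + W1_max + ε, and cost constants 0 ≤ C_min < χ_min. Let V_ext = (Y_max − Y_min − (R_max + D_max + W1_max + ε))/(χ_min − C_min), let V satisfy 0 < V ≤ V_ext, and set Q_max = V·χ_min + W1_max + ε. Let Y, R, D : ℕ → ℝ satisfy, for every t: Y(t+1) = Y(t) − D(t) + R(t), 0 ≤ R(t) ≤ R_max, 0 ≤ D(t) ≤ D_max, and, writing X(t) = Y(t) − Q_max − D_max − Y_min, the structural properties (i) if X(t) > −V·C_min then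 R(t) = 0, and (ii) if X(t) < −Q_max then D(t) = 0. If Y_min ≤ Y(0) ≤ Y_max, then Y_min ≤ Y(t) ≤ Y_max for all t ≥ 0. -/
/-- Theorem 2, part 3 (extended model): the dynamic algorithm never violates
the finite battery capacity constraint `Ymin ≤ Y t ≤ Ymax`.  Here
`X t = Y t - Qmax - Dmax - Ymin` with `Qmax = V·χmin + W1max + ε`. -/
theorem stmt_12
    (Rmax Dmax W1max ε Ymin Ymax Cmin χmin V : ℝ)
    (hRmax : 0 < Rmax) (hDmax : 0 < Dmax) (hW1 : 0 ≤ W1max) (hε : 0 ≤ ε)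
    (hYle : Ymin ≤ Ymax)
    (hgap : Ymax - Ymin > Rmax + Dmax + W1max + ε)
    (hCmin : 0 ≤ Cmin) (hχ : Cmin < χmin)
    (hV : 0 < V)
    (hVext : V ≤ (Ymax - Ymin - (Rmax + Dmax + W1max + ε)) / (χmin - Cmin))
    (Y R D : ℕ → ℝ)
    (hdyn : ∀ t, Y (t + 1) = Y t - D t + R t)
    (hR : ∀ t, 0 ≤ R t ∧ R t ≤ Rmax)
    (hD : ∀ t, 0 ≤ D t ∧ D t ≤ Dmax)
    (hnoRecharge : ∀ t,
      Y t - (V * χmin + W1max + ε) - Dmax - Ymin > -V * Cmin → R t = 0)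
    (hnoDischarge : ∀ t,
      Y t - (V * χmin + W1max + ε) - Dmax - Ymin < -(V * χmin + W1max + ε) →
        D t = 0)
    (hinit : Ymin ≤ Y 0 ∧ Y 0 ≤ Ymax) :
    ∀ t, Ymin ≤ Y t ∧ Y t ≤ Ymax := by
  have hχC : 0 < χmin - Cmin := by linarith
  have hVgap : V * (χmin - Cmin) ≤ Ymax - Ymin - (Rmax + Dmax + W1max + ε) :=
    (le_div_iff₀ hχC).mp hVext
  intro t
  induction t with
  | zero => exact hinit
  | succ n ih =>
    obtain ⟨ih1, ih2⟩ := ih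
    obtain ⟨hR0, hR1⟩ := hR n
    obtain ⟨hD0, hD1⟩ := hD n
    rw [hdyn n]
    constructor
    · by_cases h : Y n - (V * χmin + W1max + ε) - Dmax - Ymin < -(V * χmin + W1max + ε)
      · rw [hnoDischarge n h]; linarith
      · push_neg at h; linarith
    · by_cases h : Y n - (V * χmin + W1max + ε) - Dmax - Ymin > -V * Cmin
      · rw [hnoRecharge n h]; linarith
      · push_neg at h; nlinarith
end

section
/- Let C : ℝ → ℝ be nondecreasing with C(P) ≥ C_min for all P ≥ 0, where C_min ≥ 0. Let V > 0, C_rc ≥ 0, U ≥ 0, Z ≥ 0, and suppose X > −V·C_min. Then for all P and R with 0 < R ≤ P: (U + Z)·(P − R) − V·P·C(P) − V·C_rc − X·R < (U + Z)·(P − R) − V·(P − R)·C(P − R). Consequently, any optimal solution of problem P6 chooses recharge amount R* = 0 whenever X > −V·C_min. -/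
/-! Buying the extra `R` for the battery raises the grid cost `V·P·C(P)` by at least `V·R·Cmin`,
because `P ↦ P·C(P)` grows at rate at least `Cmin` when `C` is monotone and bounded below by `Cmin`.
The only offsetting term is `-X·R < V·R·Cmin`, and the recharge fee `V·Crc ≥ 0`
only adds to the loss. -/

theorem sub_mul_le_mul_apply_sub_mul_apply {α : Type*} [CommRing α] [LinearOrder α]
    [IsStrictOrderedRing α] {C : α → α} (hC : Monotone C) {c P Q : α} (hc : c ≤ C P)
    (hQ : 0 ≤ Q) (hQP : Q ≤ P) :
    (P - Q) * c ≤ P * C P - Q * C Q :=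
  calc (P - Q) * c ≤ (P - Q) * C P := mul_le_mul_of_nonneg_left hc (sub_nonneg.2 hQP)
    _ ≤ (P - Q) * C P + Q * (C P - C Q) :=
        le_add_of_nonneg_right (mul_nonneg hQ (sub_nonneg.2 (hC hQP)))
    _ = P * C P - Q * C Q := by ring

theorem stmt_14_general
    (C : ℝ → ℝ) (Cmin : ℝ)
    (hmono : Monotone C)
    (hlb : ∀ P : ℝ, 0 ≤ P → Cmin ≤ C P)
    (V Crc U Z X : ℝ)
    (hV : 0 < V) (hCrc : 0 ≤ Crc)
    (hX : X > -V * Cmin) :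
    ∀ P R : ℝ, 0 < R → R ≤ P →
      (U + Z) * (P - R) - V * (P * C P) - V * Crc - X * R <
        (U + Z) * (P - R) - V * ((P - R) * C (P - R)) := by
  intro P R hR hRP
  have hcost : R * Cmin ≤ P * C P - (P - R) * C (P - R) := by
    simpa using sub_mul_le_mul_apply_sub_mul_apply hmono (hlb P (by linarith))
      (sub_nonneg.2 hRP) (sub_le_self P hR.le)
  have hpenalty : -V * Cmin * R < X * R := mul_lt_mul_of_pos_right hX hR
  linarith [mul_le_mul_of_nonneg_left hcost hV.le, mul_nonneg hV.le hCrc]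

/-- Lemma 5, part 1 (Appendix C): when `X > -V·Cmin`, recharging by `R > 0`
gives a strictly smaller P6 objective value than the feasible alternative of
drawing `P - R` from the grid with no battery action. -/
theorem stmt_14
    (C : ℝ → ℝ) (Cmin : ℝ)
    (hmono : Monotone C)
    (hlb : ∀ P : ℝ, 0 ≤ P → Cmin ≤ C P)
    (hCmin : 0 ≤ Cmin)
    (V Crc U Z X : ℝ)
    (hV : 0 < V) (hCrc : 0 ≤ Crc) (hU : 0 ≤ U) (hZ : 0 ≤ Z)
    (hX : X > -V * Cmin) :
    ∀ P R : ℝ, 0 < R → R ≤ P →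
      (U + Z) * (P - R) - V * (P * C P) - V * Crc - X * R <
        (U + Z) * (P - R) - V * ((P - R) * C (P - R)) :=
  stmt_14_general C Cmin hmono hlb V Crc U Z X hV hCrc hX
end

section
/- Let P_peak > 0 and let C : ℝ → ℝ and χ_min ∈ ℝ satisfy: for all 0 ≤ P₁ ≤ P₂ ≤ P_peak, P₁·(−χ_min + C(P₁)) ≥ P₂·(−χ_min + C(P₂)). Let V > 0, C_dc ≥ 0, U, Z ∈ ℝ, and suppose X < −V·χ_min. Then for all P and D with P ≥ 0, D > 0, and P + D ≤ P_peak: (U + Z)·(P + D) − V·P·C(P) − V·C_dc + X·D < (U + Z)·(P + D) − V·(P + D)·C(P + D). -/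
/-- Lemma 5, part 2, first case (Appendix C): when `X < -V·χmin`, discharging
by `D > 0` with `P + D ≤ Ppeak` gives a strictly smaller P6 objective value
than the feasible alternative of drawing `P + D` from the grid with no battery
action.  The hypothesis on `χmin` is inequality (10) of the paper. -/
theorem stmt_15
    (Ppeak : ℝ) (hPpeak : 0 < Ppeak)
    (C : ℝ → ℝ) (χmin : ℝ)
    (hχ : ∀ P₁ P₂ : ℝ, 0 ≤ P₁ → P₁ ≤ P₂ → P₂ ≤ Ppeak →
      P₁ * (-χmin + C P₁) ≥ P₂ * (-χmin + C P₂))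
    (V Cdc U Z X : ℝ)
    (hV : 0 < V) (hCdc : 0 ≤ Cdc)
    (hX : X < -V * χmin) :
    ∀ P D : ℝ, 0 ≤ P → 0 < D → P + D ≤ Ppeak →
      (U + Z) * (P + D) - V * (P * C P) - V * Cdc + X * D <
        (U + Z) * (P + D) - V * ((P + D) * C (P + D)) := by
  intro P D hP hD hPD
  have h := hχ P (P + D) hP (by linarith) hPD
  nlinarith [mul_pos hV hD, mul_nonneg hV.le hCdc, mul_lt_mul_of_pos_right hX hD]
end
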